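/- arXiv:0807.1596 — 2 statements merged into one kernel-verified Lean document; each statement's English description precedes it below -/
import Mathlib

section
/- Let h : U → ℝ (U ⊂ ℝ^d open) be C¹ with frequency map ω = ∇h, and let P : ℝ → U be a differentiable curve such that P(θ') − P(θ) ∈ R(ω(P(θ))) for all θ, θ', where R(ω) is the real span of the resonance module Z(ω). Then for every θ, the derivative P'(θ) is orthogonal to ω(P(θ)), i.e., h(P(θ)) is constant along the curve. -/
open scoped RealInnerProductSpace

/-- The real span `R(ω)` of the resonance module
`Z(ω) = {k ∈ ℤ^d : ⟨k,ω⟩ = 0}` of a frequency `ω ∈ ℝ^d`. -/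
noncomputable def resonanceSpan (d : ℕ) (w : EuclideanSpace ℝ (Fin d)) :
    Submodule ℝ (EuclideanSpace ℝ (Fin d)) :=
  Submodule.span ℝ {v : EuclideanSpace ℝ (Fin d) |
    (∀ i, ∃ m : ℤ, v i = (m : ℝ)) ∧ ⟪v, w⟫ = 0}

lemma resonanceSpan_orth (d : ℕ) (w v : EuclideanSpace ℝ (Fin d))
    (hv : v ∈ resonanceSpan d w) : ⟪v, w⟫ = 0 := by
  induction hv using Submodule.span_induction with
  | mem x hx => exact hx.2
  | zero => simp
  | add x y _ _ hx hy => rw [inner_add_left, hx, hy]; ring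
  | smul c x _ hx => rw [real_inner_smul_left, hx]; ring

/-- If `P : ℝ → U` is a differentiable curve with `P(θ') − P(θ) ∈ R(ω(P(θ)))` for all
`θ, θ'`, where `ω = ∇h`, then `P'(θ)` is orthogonal to `ω(P(θ))` for every `θ`, and
`h` is constant along the curve. -/
theorem curve_in_resonance_span_orthogonal (d : ℕ)
    (U : Set (EuclideanSpace ℝ (Fin d))) (hU : IsOpen U)
    (h : EuclideanSpace ℝ (Fin d) → ℝ)
    (ω : EuclideanSpace ℝ (Fin d) → EuclideanSpace ℝ (Fin d))
    (hω : ∀ p ∈ U, HasGradientAt h (ω p) p)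
    (P P' : ℝ → EuclideanSpace ℝ (Fin d))
    (hPU : ∀ θ : ℝ, P θ ∈ U)
    (hP' : ∀ θ : ℝ, HasDerivAt P (P' θ) θ)
    (hres : ∀ θ θ' : ℝ, P θ' - P θ ∈ resonanceSpan d (ω (P θ))) :
    (∀ θ : ℝ, ⟪P' θ, ω (P θ)⟫ = 0) ∧ (∀ θ θ' : ℝ, h (P θ) = h (P θ')) := by
  have key : ∀ θ : ℝ, ⟪P' θ, ω (P θ)⟫ = 0 := by
    intro θ
    -- the function θ' ↦ ⟪P θ' - P θ, ω (P θ)⟫ is identically 0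
    have hzero : (fun θ' => ⟪P θ' - P θ, ω (P θ)⟫) = fun _ => (0 : ℝ) := by
      funext θ'
      exact resonanceSpan_orth d _ _ (hres θ θ')
    have hderiv : HasDerivAt (fun θ' => ⟪P θ' - P θ, ω (P θ)⟫) ⟪P' θ, ω (P θ)⟫ θ := by
      have h1 : HasDerivAt (fun θ' => P θ' - P θ) (P' θ) θ := (hP' θ).sub_const _
      simpa using h1.inner ℝ (hasDerivAt_const θ (ω (P θ)))
    have : HasDerivAt (fun _ : ℝ => (0 : ℝ)) ⟪P' θ, ω (P θ)⟫ θ := hzero ▸ hderiv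
    have h0 : HasDerivAt (fun _ : ℝ => (0 : ℝ)) 0 θ := hasDerivAt_const θ 0
    exact (this.unique h0)
  refine ⟨key, ?_⟩
  -- h ∘ P has zero derivative everywhere
  have hderiv : ∀ θ : ℝ, HasDerivAt (fun t => h (P t)) 0 θ := by
    intro θ
    have hg := (hω (P θ) (hPU θ)).hasFDerivAt
    have h2 := hg.comp_hasDerivAt θ (hP' θ)
    simp only [InnerProductSpace.toDual_apply_apply] at h2
    rw [real_inner_comm, key θ] at h2
    exact h2
  have hconst : ∀ θ θ' : ℝ, h (P θ) = h (P θ') := by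
    intro θ θ'
    have := is_const_of_deriv_eq_zero (f := fun t => h (P t))
      (fun t => (hderiv t).differentiableAt) (fun t => (hderiv t).deriv) θ θ'
    exact this
  exact hconst
end

section
/- With the notation above, set R = P(0) + ⋂_θ R(ω(P(θ))). Then P(θ) ∈ R for all θ, and every point P(θ) is a critical point of the restriction of h to the affine subspace R; consequently, if h is steep (critical points of h restricted to any affine subspace are isolated) then P is constant. -/
/-!
The displacements `P θ' - P θ` all lie in `R(ω(P θ))`, so differences of them place
`P θ - P 0` in every `R(ω(P θ'))`; and `ω` is orthogonal to `R(ω)`, so each `P θ` is a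
critical point of `h` on `R`. Steepness then makes every value of `P` isolated in `R`,
so the continuous curve `P` is locally constant, hence constant on the connected line.
-/

open scoped RealInnerProductSpace

/-- `h` is steep: for every affine subspace `Λ = p₀ + W`, the critical points of the
restriction of `h` to `Λ` (points `p` where the gradient `ω(p)` is orthogonal to `W`)
are isolated. -/
def IsSteep (d : ℕ) (U : Set (EuclideanSpace ℝ (Fin d)))
    (ω : EuclideanSpace ℝ (Fin d) → EuclideanSpace ℝ (Fin d)) : Prop :=
  ∀ (W : Submodule ℝ (EuclideanSpace ℝ (Fin d))) (p₀ p : EuclideanSpace ℝ (Fin d)),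
    p ∈ U → p - p₀ ∈ W → (∀ v ∈ W, ⟪ω p, v⟫ = 0) →
    ∃ ε > (0 : ℝ), ∀ p' : EuclideanSpace ℝ (Fin d),
      p' ∈ U → p' - p₀ ∈ W → (∀ v ∈ W, ⟪ω p', v⟫ = 0) → ‖p' - p‖ < ε → p' = p

theorem inner_eq_zero_of_mem_resonanceSpan {d : ℕ} {w v : EuclideanSpace ℝ (Fin d)}
    (hv : v ∈ resonanceSpan d w) : ⟪w, v⟫ = 0 := by
  have hle : resonanceSpan d w ≤ (ℝ ∙ w)ᗮ := by
    rw [resonanceSpan, Submodule.span_le]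
    rintro x ⟨-, hx⟩
    exact Submodule.mem_orthogonal_singleton_iff_inner_right.mpr (by rwa [real_inner_comm])
  exact Submodule.mem_orthogonal_singleton_iff_inner_right.mp (hle hv)

theorem sub_mem_iInf_of_forall_sub_mem {ι R M : Type*} [Ring R] [AddCommGroup M] [Module R M]
    {S : ι → Submodule R M} {P : ι → M} (hP : ∀ i j, P j - P i ∈ S i) (i j : ι) :
    P j - P i ∈ ⨅ k, S k :=
  (Submodule.mem_iInf _).mpr fun k => by
    simpa using Submodule.sub_mem _ (hP k j) (hP k i)

theorem isLocallyConstant_of_continuous_of_isolated {X Y : Type*} [TopologicalSpace X]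
    [PseudoMetricSpace Y] {f : X → Y} (hf : Continuous f)
    (hiso : ∀ x, ∃ ε > 0, ∀ y, dist (f y) (f x) < ε → f y = f x) : IsLocallyConstant f :=
  (IsLocallyConstant.iff_eventually_eq f).mpr fun x => by
    obtain ⟨ε, hε, hx⟩ := hiso x
    filter_upwards [Metric.tendsto_nhds.mp (hf.tendsto x) ε hε] with y hy
    exact hx y hy

theorem curve_in_intersection_critical_and_steep_implies_constant_general (d : ℕ)
    (U : Set (EuclideanSpace ℝ (Fin d)))
    (ω : EuclideanSpace ℝ (Fin d) → EuclideanSpace ℝ (Fin d))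
    (P : ℝ → EuclideanSpace ℝ (Fin d))
    (hPcont : Continuous P)
    (hPU : ∀ θ : ℝ, P θ ∈ U)
    (hres : ∀ θ θ' : ℝ, P θ' - P θ ∈ resonanceSpan d (ω (P θ)))
    (V : Submodule ℝ (EuclideanSpace ℝ (Fin d)))
    (hV : V = ⨅ θ : ℝ, resonanceSpan d (ω (P θ))) :
    (∀ θ : ℝ, P θ - P 0 ∈ V) ∧
    (∀ θ : ℝ, ∀ v ∈ V, ⟪ω (P θ), v⟫ = 0) ∧
    (IsSteep d U ω → ∀ θ : ℝ, P θ = P 0) := by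
  subst hV
  have hmem (θ : ℝ) := sub_mem_iInf_of_forall_sub_mem hres 0 θ
  have hcrit (θ : ℝ) (v) (hv : v ∈ ⨅ θ' : ℝ, resonanceSpan d (ω (P θ'))) :
      ⟪ω (P θ), v⟫ = 0 :=
    inner_eq_zero_of_mem_resonanceSpan ((Submodule.mem_iInf _).mp hv θ)
  refine ⟨hmem, hcrit, fun hsteep => ?_⟩
  have hlc : IsLocallyConstant P := isLocallyConstant_of_continuous_of_isolated hPcont fun θ => by
    obtain ⟨ε, hε, hiso⟩ := hsteep _ (P 0) (P θ) (hPU θ) (hmem θ) (hcrit θ)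
    exact ⟨ε, hε, fun θ' hθ' =>
      hiso _ (hPU θ') (hmem θ') (hcrit θ') (by rwa [← dist_eq_norm])⟩
  exact fun θ => hlc.apply_eq_of_preconnectedSpace θ 0

/-- With `R = P(0) + ⋂_θ R(ω(P(θ)))`: the curve `P` lies in `R`, every point `P(θ)` is
a critical point of the restriction of `h` to the affine subspace `R`, and if `h` is
steep then `P` is constant. -/
theorem curve_in_intersection_critical_and_steep_implies_constant (d : ℕ)
    (U : Set (EuclideanSpace ℝ (Fin d))) (hU : IsOpen U)
    (h : EuclideanSpace ℝ (Fin d) → ℝ)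
    (ω : EuclideanSpace ℝ (Fin d) → EuclideanSpace ℝ (Fin d))
    (hω : ∀ p ∈ U, HasGradientAt h (ω p) p)
    (P : ℝ → EuclideanSpace ℝ (Fin d))
    (hPcont : Continuous P)
    (hPU : ∀ θ : ℝ, P θ ∈ U)
    (hres : ∀ θ θ' : ℝ, P θ' - P θ ∈ resonanceSpan d (ω (P θ)))
    (V : Submodule ℝ (EuclideanSpace ℝ (Fin d)))
    (hV : V = ⨅ θ : ℝ, resonanceSpan d (ω (P θ))) :
    (∀ θ : ℝ, P θ - P 0 ∈ V) ∧
    (∀ θ : ℝ, ∀ v ∈ V, ⟪ω (P θ), v⟫ = 0) ∧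
    (IsSteep d U ω → ∀ θ : ℝ, P θ = P 0) :=
  curve_in_intersection_critical_and_steep_implies_constant_general d U ω P hPcont hPU hres V hV
end
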